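/- arXiv:2501.06914 — 4 statements merged into one kernel-verified Lean document; each statement's English description precedes it below -/
import Mathlib

section
/- Let 1 → T → G → W → 1 be a toral group with W finite, and let π: G → W be the projection. If a sequence of closed subgroups (H_n) of G converges in the Hausdorff metric to a full subgroup H (one with π(H) = W), then all but finitely many H_n are full. -/
open Filter

/-- Let `1 → T → G → W → 1` be a toral group with `W` finite.  If a sequence of
closed subgroups `(Hₙ)` of `G` converges in the Hausdorff metric to a full
subgroup `H` (one with `π(H) = W`), then all but finitely many `Hₙ` are full. -/
theorem eventually_full_of_tendsto_full
    {G W : Type*} [Group G] [MetricSpace G] [IsTopologicalGroup G] [CompactSpace G]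
    [Group W] [Finite W] [TopologicalSpace W] [DiscreteTopology W]
    (π : G →* W) (hπ : Function.Surjective π) (hπc : Continuous π)
    -- the kernel `T` of `π` is a torus
    (hT : ∃ (r : ℕ) (e : ↥π.ker ≃* (Fin r → Circle)), Continuous e ∧ Continuous e.symm)
    (K : ℕ → Subgroup G) (hKcl : ∀ n, IsClosed (K n : Set G))
    (H : Subgroup G) (hHcl : IsClosed (H : Set G)) (hfull : Subgroup.map π H = ⊤)
    (hconv : Tendsto (fun n => Metric.hausdorffDist (K n : Set G) (H : Set G))
      atTop (nhds 0)) :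
    ∀ᶠ n in atTop, Subgroup.map π (K n) = ⊤ := by
  classical
  haveI : Fintype W := Fintype.ofFinite W
  -- choose preimages in H
  have hg : ∀ w : W, ∃ g ∈ H, π g = w := by
    intro w
    have : w ∈ Subgroup.map π H := by rw [hfull]; trivial
    simpa [Subgroup.mem_map] using this
  choose g hgH hgπ using hg
  -- π locally constant
  have heps : ∀ w : W, ∃ ε > 0, ∀ x, dist x (g w) < ε → π x = w := by
    intro w
    have hopen : IsOpen (π ⁻¹' {w}) := (isOpen_discrete _).preimage hπc
    have hmem : g w ∈ π ⁻¹' {w} := by simp [hgπ w]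
    obtain ⟨ε, hε, hball⟩ := Metric.isOpen_iff.1 hopen _ hmem
    exact ⟨ε, hε, fun x hx => hball (by simpa [Metric.mem_ball] using hx)⟩
  choose ε hεpos hεconst using heps
  set ε₀ := Finset.univ.inf' (Finset.univ_nonempty) ε with hε₀
  have hε₀pos : 0 < ε₀ := by
    exact (Finset.lt_inf'_iff _).2 fun w _ => hεpos w
  have hεle : ∀ w : W, ε₀ ≤ ε w := fun w => Finset.inf'_le _ (Finset.mem_univ w)
  have hev : ∀ᶠ n in atTop, Metric.hausdorffDist (K n : Set G) (H : Set G) < ε₀ := by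
    have := hconv.eventually (eventually_lt_nhds hε₀pos)
    simpa using this
  filter_upwards [hev] with n hn
  rw [eq_top_iff]
  intro w _
  have hne : EMetric.hausdorffEdist (K n : Set G) (H : Set G) ≠ ⊤ := by
    apply Metric.hausdorffEdist_ne_top_of_nonempty_of_bounded
    · exact ⟨1, (K n).one_mem⟩
    · exact ⟨1, H.one_mem⟩
    · exact Metric.isBounded_of_compactSpace
    · exact Metric.isBounded_of_compactSpace
  obtain ⟨y, hyK, hy⟩ := Metric.exists_dist_lt_of_hausdorffDist_lt' (hgH w) hn hne
  have : π y = w := hεconst w y (lt_of_lt_of_le hy (hεle w))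
  exact ⟨y, hyK, this⟩
end

section
/- Let G be a toral group with torus T and component group W, S ≤ T a W-invariant closed subgroup, and H(S,σ) a full subgroup of G with H(S,σ) ∩ T = S. Then the normalizer N_G(H(S,σ)) equals H(S⁺, σ), where S⁺ = { t ∈ T : t^w · t⁻¹ ∈ S for all w ∈ W }; in particular S⁺ is a closed subgroup of T containing S. -/
/-- The set `S⁺ = { t ∈ T : t^w·t⁻¹ ∈ S for all w ∈ W }`, where
`t^w = σ(w)⁻¹·t·σ(w)`. -/
def SPlus {G W : Type*} [Group G] [Group W] (π : G →* W) (σ : W → G)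
    (S : Subgroup G) : Set G :=
  {t | t ∈ π.ker ∧ ∀ w : W, (σ w)⁻¹ * t * σ w * t⁻¹ ∈ S}

/-- The full subgroup `H(S,σ)` generated by `{σ(w)·s : w ∈ W, s ∈ S}`, which is in
fact exactly the set `{σ(w)·s : w ∈ W, s ∈ S}`. -/
def fullSubgroup {G W : Type*} [Group G] [Group W] (σ : W → G) (hσ1 : σ 1 = 1)
    (S : Subgroup G)
    (hSinv : ∀ w, ∀ s ∈ S, (σ w)⁻¹ * s * σ w ∈ S)
    (hf : ∀ v w, (σ (v * w))⁻¹ * σ v * σ w ∈ S) : Subgroup G where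
  carrier := {x | ∃ w, ∃ s ∈ S, x = σ w * s}
  one_mem' := ⟨1, 1, S.one_mem, by simp [hσ1]⟩
  mul_mem' := by
    rintro x y ⟨v, s, hs, rfl⟩ ⟨w, s', hs', rfl⟩
    refine ⟨v * w, ((σ (v * w))⁻¹ * σ v * σ w) * ((σ w)⁻¹ * s * σ w) * s',
      S.mul_mem (S.mul_mem (hf v w) (hSinv w s hs)) hs', ?_⟩
    group
  inv_mem' := by
    rintro x ⟨w, s, hs, rfl⟩
    have hd : σ w * σ w⁻¹ ∈ S := by simpa [hσ1] using hf w w⁻¹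
    refine ⟨w⁻¹, ((σ w⁻¹)⁻¹ * s⁻¹ * σ w⁻¹) * (σ w * σ w⁻¹)⁻¹,
      S.mul_mem (hSinv w⁻¹ s⁻¹ (S.inv_mem hs)) (S.inv_mem hd), ?_⟩
    group

/-- For a full subgroup `H(S,σ)` of a toral group `G` (the subgroup generated by
`{σ(w)·s : w ∈ W, s ∈ S}`), the normalizer `N_G(H(S,σ))` is `H(S⁺,σ)` where
`S⁺ = { t ∈ T : t^w·t⁻¹ ∈ S for all w ∈ W }`; in particular `S⁺` is a closed
subgroup of `T` containing `S`. -/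
theorem normalizer_HSsigma_eq_HSPlus
    {G W : Type*} [Group G] [Group W] [Finite W]
    [TopologicalSpace G] [IsTopologicalGroup G] [TopologicalSpace W] [DiscreteTopology W]
    (π : G →* W) (hπ : Function.Surjective π) (hπc : Continuous π)
    -- `T = ker π` is abelian (a torus)
    (hcomm : ∀ x y : G, x ∈ π.ker → y ∈ π.ker → x * y = y * x)
    (σ : W → G) (hσ : ∀ w, π (σ w) = w) (hσ1 : σ 1 = 1)
    (S : Subgroup G) (hS : S ≤ π.ker) (hScl : IsClosed (S : Set G))
    (hSinv : ∀ w, ∀ s ∈ S, (σ w)⁻¹ * s * σ w ∈ S)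
    (hf : ∀ v w, (σ (v * w))⁻¹ * σ v * σ w ∈ S) :
    Subgroup.normalizer ((Subgroup.closure {x | ∃ w, ∃ s ∈ S, x = σ w * s} : Subgroup G) : Set G) =
        Subgroup.closure {x | ∃ w, ∃ t ∈ SPlus π σ S, x = σ w * t} ∧
      -- `S⁺` contains `S`
      (S : Set G) ⊆ SPlus π σ S ∧
      -- `S⁺` is a subgroup of `T`
      (1 : G) ∈ SPlus π σ S ∧
      (∀ a ∈ SPlus π σ S, ∀ b ∈ SPlus π σ S, a * b⁻¹ ∈ SPlus π σ S) ∧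
      SPlus π σ S ⊆ (π.ker : Set G) ∧
      -- `S⁺` is closed
      IsClosed (SPlus π σ S) := by
  -- conjugation by `σ w` preserves `T = ker π`
  have hker : ∀ (w : W), ∀ t ∈ π.ker, (σ w)⁻¹ * t * σ w ∈ π.ker := by
    intro w t ht
    have ht' : π t = 1 := ht
    simp [MonoidHom.mem_ker, map_mul, map_inv, hσ, ht']
  -- `S ⊆ S⁺`
  have hSsub : (S : Set G) ⊆ SPlus π σ S := by
    intro s hs
    exact ⟨hS hs, fun w => S.mul_mem (hSinv w s hs) (S.inv_mem hs)⟩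
  -- `S⁺` is a subgroup
  let SP : Subgroup G :=
    { carrier := SPlus π σ S
      one_mem' := ⟨π.ker.one_mem, fun w => by simpa using S.one_mem⟩
      mul_mem' := by
        rintro a b ⟨ha1, ha2⟩ ⟨hb1, hb2⟩
        refine ⟨π.ker.mul_mem ha1 hb1, fun w => ?_⟩
        have hc : ((σ w)⁻¹ * b * σ w * b⁻¹) * a⁻¹ = a⁻¹ * ((σ w)⁻¹ * b * σ w * b⁻¹) :=
          hcomm _ _ (hS (hb2 w)) (π.ker.inv_mem ha1)
        have e : (σ w)⁻¹ * (a * b) * σ w * (a * b)⁻¹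
            = ((σ w)⁻¹ * a * σ w) * (((σ w)⁻¹ * b * σ w * b⁻¹) * a⁻¹) := by group
        rw [e, hc, ← mul_assoc]
        exact S.mul_mem (ha2 w) (hb2 w)
      inv_mem' := by
        rintro a ⟨ha1, ha2⟩
        refine ⟨π.ker.inv_mem ha1, fun w => ?_⟩
        have e : (σ w)⁻¹ * a⁻¹ * σ w * a⁻¹⁻¹ = ((σ w)⁻¹ * a * σ w)⁻¹ * a := by group
        have hc : ((σ w)⁻¹ * a * σ w)⁻¹ * a = a * ((σ w)⁻¹ * a * σ w)⁻¹ :=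
          hcomm _ _ (π.ker.inv_mem (hker w a ha1)) ha1
        have e2 : a * ((σ w)⁻¹ * a * σ w)⁻¹ = ((σ w)⁻¹ * a * σ w * a⁻¹)⁻¹ := by group
        rw [e, hc, e2]
        exact S.inv_mem (ha2 w) }
  -- `S⁺` is `W`-invariant
  have hSPinv : ∀ w, ∀ t ∈ SP, (σ w)⁻¹ * t * σ w ∈ SP := by
    intro w t ht
    have e : (σ w)⁻¹ * t * σ w = ((σ w)⁻¹ * t * σ w * t⁻¹) * t := by group
    rw [e]
    exact SP.mul_mem (hSsub (ht.2 w)) ht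
  have hfSP : ∀ v w, (σ (v * w))⁻¹ * σ v * σ w ∈ SP := fun v w => hSsub (hf v w)
  -- the two full subgroups
  let KS : Subgroup G := fullSubgroup σ hσ1 S hSinv hf
  let KSP : Subgroup G := fullSubgroup σ hσ1 SP hSPinv hfSP
  have hKS : Subgroup.closure {x | ∃ w, ∃ s ∈ S, x = σ w * s} = KS :=
    Subgroup.closure_eq KS
  have hKSP : Subgroup.closure {x | ∃ w, ∃ t ∈ SPlus π σ S, x = σ w * t} = KSP :=
    Subgroup.closure_eq KSP
  -- elements of `S⁺` conjugate `KS` into itself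
  have hconj : ∀ t ∈ SP, ∀ h ∈ KS, t * h * t⁻¹ ∈ KS := by
    rintro t ht h ⟨v, s, hs, rfl⟩
    have hts : t * s * t⁻¹ = s := by
      rw [hcomm t s ht.1 (hS hs)]; group
    refine ⟨v, ((σ v)⁻¹ * t * σ v * t⁻¹) * (t * s * t⁻¹),
      ?_, by group⟩
    rw [hts]
    exact S.mul_mem (ht.2 v) hs
  have hσmem : ∀ w : W, σ w ∈ KS := fun w => ⟨w, 1, S.one_mem, by simp⟩
  -- main equality
  have hmain : (Subgroup.normalizer (KS : Set G)) = KSP := by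
    apply le_antisymm
    · -- normalizer ≤ KSP
      intro x hx
      set w := π x with hw
      set t := (σ w)⁻¹ * x with htdef
      have htker : t ∈ π.ker := by
        simp [MonoidHom.mem_ker, htdef, map_mul, map_inv, hσ, hw]
      have htnorm : t ∈ (Subgroup.normalizer (KS : Set G)) :=
        (Subgroup.normalizer (KS : Set G)).mul_mem ((Subgroup.normalizer (KS : Set G)).inv_mem (Subgroup.le_normalizer (hσmem w))) hx
      have ht2 : ∀ v : W, (σ v)⁻¹ * t * σ v * t⁻¹ ∈ S := by
        intro v
        have hv : t * σ v * t⁻¹ ∈ KS := by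
          rw [← Subgroup.mem_normalizer_iff.1 htnorm (σ v)]
          exact hσmem v
        obtain ⟨u, s, hs, hus⟩ := hv
        have hu : u = v := by
          have : π (t * σ v * t⁻¹) = π (σ u * s) := by rw [hus]
          have htk : π t = 1 := htker
          have hsk : π s = 1 := hS hs
          simpa [map_mul, map_inv, hσ, htk, hsk] using this.symm
        have e : (σ v)⁻¹ * t * σ v * t⁻¹ = (σ v)⁻¹ * (t * σ v * t⁻¹) := by group
        rw [e, hus, hu]
        have : (σ v)⁻¹ * (σ v * s) = s := by group
        rw [this]; exact hs
      refine ⟨w, t, ⟨htker, ht2⟩, ?_⟩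
      rw [htdef]; group
    · -- KSP ≤ normalizer
      rintro x ⟨w, t, ht, rfl⟩
      refine (Subgroup.normalizer (KS : Set G)).mul_mem (Subgroup.le_normalizer (hσmem w)) ?_
      rw [Subgroup.mem_normalizer_iff]
      intro h
      constructor
      · exact fun hh => hconj t ht h hh
      · intro hh
        have h2 := hconj t⁻¹ (SP.inv_mem ht) _ hh
        have e : t⁻¹ * (t * h * t⁻¹) * t⁻¹⁻¹ = h := by group
        rwa [e] at h2
  -- closedness of `S⁺`
  have hclosed : IsClosed (SPlus π σ S) := by
    have heq : SPlus π σ S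
        = (π ⁻¹' {1}) ∩ ⋂ w : W, (fun t => (σ w)⁻¹ * t * σ w * t⁻¹) ⁻¹' (S : Set G) := by
      ext t
      simp [SPlus, MonoidHom.mem_ker, Set.mem_iInter]
    rw [heq]
    refine IsClosed.inter (IsClosed.preimage hπc (isClosed_discrete _)) ?_
    refine isClosed_iInter fun w => IsClosed.preimage ?_ hScl
    exact (((continuous_const.mul continuous_id).mul continuous_const).mul continuous_inv)
  refine ⟨by rw [hKS, hKSP, hmain], hSsub, SP.one_mem, ?_, fun t ht => ht.1, hclosed⟩
  intro a ha b hb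
  exact SP.mul_mem ha (SP.inv_mem hb)
end

section
/- Let W = C₂ act on the lattice Λ = ℤ² with the generator acting by (x,y) ↦ (x,−y). Then every W-invariant finite-index sublattice of Λ is either of Type 1: generated by (m,0) and (0,n) for some integers m,n ≥ 1, or of Type 2: generated by (m,n) and (m,−n) for some integers m,n ≥ 1 (the latter containing the Type 1 lattice generated by (2m,0),(0,2n) with index 2). -/
private lemma memspan2 (a b x y : ℤ) (v : ℤ × ℤ) :
    v ∈ Submodule.span ℤ ({(a,b), (x,y)} : Set (ℤ×ℤ)) ↔
      ∃ c d : ℤ, c * a + d * x = v.1 ∧ c * b + d * y = v.2 := by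
  rw [Submodule.mem_span_pair]
  constructor
  · rintro ⟨c, d, h⟩
    refine ⟨c, d, ?_, ?_⟩
    · simpa using congrArg Prod.fst h
    · simpa using congrArg Prod.snd h
  · rintro ⟨c, d, h1, h2⟩
    exact ⟨c, d, by simp [Prod.ext_iff, Prod.smul_def, smul_eq_mul, h1, h2]⟩

private lemma rank_absurd (Λ : Submodule ℤ (ℤ × ℤ)) (hrank : Module.rank ℤ ↥Λ = 2)
    (f : ↥Λ →ₗ[ℤ] ℤ) (hf : Function.Injective f) : False := by
  have h := LinearMap.rank_le_of_injective f hf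
  rw [hrank, Module.rank_self] at h
  norm_num at h

/-- Let `W = C₂` act on `Λ = ℤ²` with the generator acting by `(x,y) ↦ (x,−y)`.
Every `W`-invariant finite-index (i.e. rank 2) sublattice is either of
Type 1: generated by `(m,0)` and `(0,n)` with `m,n ≥ 1`, or of
Type 2: generated by `(m,n)` and `(m,−n)` with `m,n ≥ 1`, the latter containing
the Type 1 lattice generated by `(2m,0),(0,2n)` with index 2. -/
theorem invariant_lattice_classification_Z_Ztilde
    (Λ : Submodule ℤ (ℤ × ℤ))
    (hinv : ∀ v ∈ Λ, ((v.1, -v.2) : ℤ × ℤ) ∈ Λ)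
    (hrank : Module.rank ℤ ↥Λ = 2) :
    (∃ m n : ℤ, 1 ≤ m ∧ 1 ≤ n ∧
        Λ = Submodule.span ℤ {((m, 0) : ℤ × ℤ), (0, n)}) ∨
    (∃ m n : ℤ, 1 ≤ m ∧ 1 ≤ n ∧
        Λ = Submodule.span ℤ {((m, n) : ℤ × ℤ), (m, -n)} ∧
        Submodule.span ℤ {((2 * m, 0) : ℤ × ℤ), (0, 2 * n)} ≤ Λ ∧
        (Submodule.span ℤ {((2 * m, 0) : ℤ × ℤ), (0, 2 * n)}).toAddSubgroup.relIndex
          Λ.toAddSubgroup = 2) := by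
  classical
  have hdouble : ∀ v ∈ Λ, ((0, 2 * v.2) : ℤ × ℤ) ∈ Λ := by
    intro v hv
    have h := Λ.sub_mem hv (hinv v hv)
    have e : ((0, 2 * v.2) : ℤ × ℤ) = v - (v.1, -v.2) := by
      simp [Prod.ext_iff]; ring
    rw [e]; exact h
  -- the ideal of first coordinates
  set I : Ideal ℤ := Λ.map (LinearMap.fst ℤ ℤ ℤ) with hI
  obtain ⟨g, hg⟩ := (inferInstance : I.IsPrincipal).principal
  set m : ℤ := (g.natAbs : ℤ) with hmdef
  have hIm : I = Ideal.span {m} := by rw [hg, hmdef]; exact (Int.span_natAbs g).symm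
  have hdvd1 : ∀ v ∈ Λ, m ∣ v.1 := by
    intro v hv
    have : v.1 ∈ I := ⟨v, hv, rfl⟩
    rwa [hIm, Ideal.mem_span_singleton] at this
  have hmmem : ∃ y : ℤ, ((m, y) : ℤ × ℤ) ∈ Λ := by
    have : m ∈ I := by rw [hIm]; exact Ideal.mem_span_singleton_self m
    obtain ⟨v, hv, hv1⟩ := this
    exact ⟨v.2, by rwa [show ((m, v.2) : ℤ×ℤ) = v from Prod.ext hv1.symm rfl] ⟩
  -- the ideal of second coordinates over 0
  set J : Ideal ℤ := Λ.comap (LinearMap.inr ℤ ℤ ℤ) with hJ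
  obtain ⟨h, hh⟩ := (inferInstance : J.IsPrincipal).principal
  set n' : ℤ := (h.natAbs : ℤ) with hndef
  have hJn : J = Ideal.span {n'} := by rw [hh, hndef]; exact (Int.span_natAbs h).symm
  have hJmem : ∀ y : ℤ, ((0, y) : ℤ × ℤ) ∈ Λ ↔ y ∈ J := by
    intro y; rw [hJ]; simp [Submodule.mem_comap]
  have hdvd2 : ∀ y : ℤ, ((0, y) : ℤ × ℤ) ∈ Λ → n' ∣ y := by
    intro y hy
    rw [hJmem, hJn, Ideal.mem_span_singleton] at hy; exact hy
  have hnmem : ((0, n') : ℤ × ℤ) ∈ Λ := by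
    rw [hJmem, hJn]; exact Ideal.mem_span_singleton_self n'
  -- nontriviality
  have hm0 : m ≠ 0 := by
    intro h0
    have hzero : ∀ v ∈ Λ, v.1 = 0 := by
      intro v hv
      have := hdvd1 v hv
      rw [h0] at this
      simpa using this
    refine rank_absurd Λ hrank ((LinearMap.snd ℤ ℤ ℤ).comp Λ.subtype) ?_
    intro a b hab
    ext
    · rw [hzero a a.2, hzero b b.2]
    · exact hab
  have hn0 : n' ≠ 0 := by
    intro h0
    have hzero : ∀ v ∈ Λ, v.2 = 0 := by
      intro v hv
      have := hdvd2 _ (hdouble v hv)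
      rw [h0] at this
      simpa using this
    refine rank_absurd Λ hrank ((LinearMap.fst ℤ ℤ ℤ).comp Λ.subtype) ?_
    intro a b hab
    ext
    · exact hab
    · rw [hzero a a.2, hzero b b.2]
  have hmpos : 0 ≤ m := Int.natCast_nonneg _
  have hnpos : 0 ≤ n' := Int.natCast_nonneg _
  have hm1 : 1 ≤ m := by omega
  have hn1 : 1 ≤ n' := by omega
  by_cases hc : ((m, 0) : ℤ × ℤ) ∈ Λ
  · -- Type 1
    left
    refine ⟨m, n', hm1, hn1, le_antisymm ?_ ?_⟩
    · intro v hv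
      rw [memspan2]
      obtain ⟨s, hs⟩ := hdvd1 v hv
      have h0 : ((0, v.2) : ℤ × ℤ) ∈ Λ := by
        have hsm := Λ.sub_mem hv (Λ.smul_mem s hc)
        have e : ((0, v.2) : ℤ × ℤ) = v - s • ((m, 0) : ℤ × ℤ) := by
          simp [Prod.ext_iff, smul_eq_mul, hs, mul_comm]
        rw [e]; exact hsm
      obtain ⟨t, ht⟩ := hdvd2 v.2 h0
      exact ⟨s, t, by simp [hs, mul_comm], by simp [ht, mul_comm]⟩
    · rw [Submodule.span_le]
      rintro x hx
      simp only [Set.mem_insert_iff, Set.mem_singleton_iff] at hx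
      rcases hx with rfl | rfl
      · exact hc
      · exact hnmem
  · -- Type 2
    right
    obtain ⟨y0, hy0⟩ := hmmem
    have hy0nd : ¬ n' ∣ y0 := by
      intro ⟨k, hk⟩
      apply hc
      have h1 : ((0, y0) : ℤ × ℤ) ∈ Λ := by
        have := Λ.smul_mem k hnmem
        have e : ((0, y0) : ℤ × ℤ) = k • ((0, n') : ℤ × ℤ) := by
          simp [Prod.ext_iff, smul_eq_mul, hk, mul_comm]
        rw [e]; exact this
      have := Λ.sub_mem hy0 h1
      have e : ((m, 0) : ℤ × ℤ) = (m, y0) - (0, y0) := by simp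
      rw [e]; exact this
    obtain ⟨t, ht⟩ : n' ∣ 2 * y0 := hdvd2 _ (by simpa using hdouble (m, y0) hy0)
    have htodd : ¬ 2 ∣ t := by
      intro ⟨t', ht'⟩
      refine hy0nd ⟨t', ?_⟩
      have h2 : 2 * y0 = 2 * (n' * t') := by rw [ht, ht']; ring
      omega
    have h2n : (2 : ℤ) ∣ n' := by
      rcases (Int.Prime.dvd_mul' Nat.prime_two ⟨y0, ht.symm⟩ : 2 ∣ n' ∨ 2 ∣ t) with h | h
      · exact h
      · exact absurd h htodd
    obtain ⟨n, hn⟩ := h2n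
    have hnn1 : 1 ≤ n := by omega
    obtain ⟨k, hk⟩ : ∃ k : ℤ, t = 2 * k + 1 := ⟨(t-1)/2, by omega⟩
    have hy0eq : y0 = n * t := by
      have : 2 * y0 = 2 * (n * t) := by rw [ht, hn]; ring
      omega
    have hMn : ((m, n) : ℤ × ℤ) ∈ Λ := by
      have hsm := Λ.sub_mem hy0 (Λ.smul_mem k hnmem)
      have e : ((m, n) : ℤ × ℤ) = (m, y0) - k • ((0, n') : ℤ × ℤ) := by
        simp only [Prod.smul_def, Prod.mk_sub_mk, Prod.mk.injEq, smul_eq_mul]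
        constructor
        · omega
        · rw [hy0eq, hn, hk]; ring
      rw [e]; exact hsm
    have hMn' : ((m, -n) : ℤ × ℤ) ∈ Λ := by simpa using hinv (m, n) hMn
    -- membership characterizations
    have hdec : ∀ v ∈ Λ, ∃ s u : ℤ, v.1 = m * s ∧ v.2 = n * s + 2 * n * u := by
      intro v hv
      obtain ⟨s, hs⟩ := hdvd1 v hv
      have h0 : ((0, v.2 - s * n) : ℤ × ℤ) ∈ Λ := by
        have hsm := Λ.sub_mem hv (Λ.smul_mem s hMn)
        have e : ((0, v.2 - s * n) : ℤ × ℤ) = v - s • ((m, n) : ℤ × ℤ) := by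
          simp [Prod.ext_iff, smul_eq_mul, hs, mul_comm]
        rw [e]; exact hsm
      obtain ⟨u, hu⟩ := hdvd2 _ h0
      rw [hn] at hu
      exact ⟨s, u, hs, by have := mul_comm s n; omega⟩
    have hspan : Λ = Submodule.span ℤ {((m, n) : ℤ × ℤ), (m, -n)} := by
      refine le_antisymm ?_ ?_
      · intro v hv
        rw [memspan2]
        obtain ⟨s, u, h1, h2⟩ := hdec v hv
        refine ⟨s + u, -u, ?_, ?_⟩
        · rw [h1]; ring
        · rw [h2]; ring
      · rw [Submodule.span_le]
        rintro x hx
        simp only [Set.mem_insert_iff, Set.mem_singleton_iff] at hx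
        rcases hx with rfl | rfl
        · exact hMn
        · exact hMn'
    have hHle : Submodule.span ℤ {((2 * m, 0) : ℤ × ℤ), (0, 2 * n)} ≤ Λ := by
      rw [Submodule.span_le]
      rintro x hx
      simp only [Set.mem_insert_iff, Set.mem_singleton_iff] at hx
      rcases hx with rfl | rfl
      · have := Λ.add_mem hMn hMn'
        have e : ((2 * m, 0) : ℤ × ℤ) = (m, n) + (m, -n) := by
          simp [Prod.ext_iff]; ring
        rw [e]; exact this
      · have := Λ.sub_mem hMn hMn'
        have e : ((0, 2 * n) : ℤ × ℤ) = (m, n) - (m, -n) := by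
          simp [Prod.ext_iff]; ring
        rw [e]; exact this
    refine ⟨m, n, hm1, hnn1, hspan, hHle, ?_⟩
    have hHmem : ∀ X Y : ℤ, (((X, Y) : ℤ × ℤ) ∈
        Submodule.span ℤ {((2 * m, 0) : ℤ × ℤ), (0, 2 * n)}) ↔ (2 * m ∣ X ∧ 2 * n ∣ Y) := by
      intro X Y
      rw [memspan2]
      constructor
      · rintro ⟨c, d, h1, h2⟩
        have h1' : c * (2 * m) + d * 0 = X := h1
        have h2' : c * 0 + d * (2 * n) = Y := h2
        exact ⟨⟨c, by rw [← h1']; ring⟩, ⟨d, by rw [← h2']; ring⟩⟩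
      · rintro ⟨⟨c, h1⟩, ⟨d, h2⟩⟩
        exact ⟨c, d, by show _ = X; rw [h1]; ring, by show _ = Y; rw [h2]; ring⟩
    rw [AddSubgroup.relIndex, AddSubgroup.index_eq_two_iff]
    refine ⟨⟨(m, n), hMn⟩, ?_⟩
    rintro ⟨v, hv⟩
    obtain ⟨s, u, h1, h2⟩ := hdec v hv
    simp only [AddSubgroup.mem_addSubgroupOf, AddSubgroup.coe_add, Submodule.mem_toAddSubgroup]
    rw [show v + ((m, n) : ℤ × ℤ) = (v.1 + m, v.2 + n) from rfl, hHmem,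
      show v = (v.1, v.2) from rfl, hHmem]
    rw [h1, h2]
    have hA : (2 * m ∣ m * s + m ∧ 2 * n ∣ n * s + 2 * n * u + n) ↔ 2 ∣ s + 1 := by
      constructor
      · rintro ⟨⟨c, hc'⟩, -⟩
        exact ⟨c, by have := hm1; nlinarith⟩
      · rintro ⟨c, hc'⟩
        exact ⟨⟨c, by rw [show s = 2*c - 1 by omega]; ring⟩,
               ⟨c + u, by rw [show s = 2*c - 1 by omega]; ring⟩⟩
    have hB : (2 * m ∣ m * s ∧ 2 * n ∣ n * s + 2 * n * u) ↔ 2 ∣ s := by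
      constructor
      · rintro ⟨⟨c, hc'⟩, -⟩
        exact ⟨c, by have := hm1; nlinarith⟩
      · rintro ⟨c, hc'⟩
        exact ⟨⟨c, by rw [show s = 2*c by omega]; ring⟩,
               ⟨c + u, by rw [show s = 2*c by omega]; ring⟩⟩
    rw [hA, hB, Xor]
    omega
end

section
/- Up to isomorphism of ℤ[D₆]-modules there are exactly two actions of the dihedral group D₆ of order 6 on ℤ² restricting to multiplication by ω on ℤ[ω] ≅ ℤ² for the rotation subgroup C₃: one in which the reflection acts as reflection in the line through 1 (complex conjugation), and one in which it acts as reflection in the line through 2+ω. -/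
private lemma lin_expand (f : (ℤ × ℤ) →ₗ[ℤ] (ℤ × ℤ)) (v : ℤ × ℤ) :
    f v = (v.1 * (f (1,0)).1 + v.2 * (f (0,1)).1,
           v.1 * (f (1,0)).2 + v.2 * (f (0,1)).2) := by
  have h : f v = f (v.1 • ((1,0) : ℤ × ℤ) + v.2 • ((0,1) : ℤ × ℤ)) := by
    congr 1
    ext <;> simp
  rw [h, map_add, map_smul, map_smul]
  ext <;> simp [mul_comm]

private def gE : (ℤ × ℤ) ≃ₗ[ℤ] (ℤ × ℤ) where
  toFun v := (-v.2, v.1 - v.2)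
  invFun v := (v.2 - v.1, -v.1)
  map_add' x y := by ext <;> simp <;> ring
  map_smul' m v := by ext <;> simp <;> ring
  left_inv v := by ext <;> simp
  right_inv v := by ext <;> simp

private def gE2 : (ℤ × ℤ) ≃ₗ[ℤ] (ℤ × ℤ) where
  toFun v := (v.2 - v.1, -v.1)
  invFun v := (-v.2, v.1 - v.2)
  map_add' x y := by ext <;> simp <;> ring
  map_smul' m v := by ext <;> simp <;> ring
  left_inv v := by ext <;> simp
  right_inv v := by ext <;> simp

private lemma gE_apply (v : ℤ × ℤ) : gE v = (-v.2, v.1 - v.2) := rfl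
private lemma gE2_apply (v : ℤ × ℤ) : gE2 v = (v.2 - v.1, -v.1) := rfl
private lemma refl_apply (v : ℤ × ℤ) : (LinearEquiv.refl ℤ (ℤ × ℤ)) v = v := rfl

/-- Up to isomorphism of `ℤ[D₆]`-modules there are exactly two actions of the
dihedral group `D₆` of order 6 on `ℤ²` restricting to multiplication by `ω` (the
matrix `g(x,y) = (−y, x−y)`) for the rotation subgroup `C₃`: the reflection `τ`
must be conjugate, by a `g`-equivariant automorphism, either to reflection in the
line through `1` (complex conjugation, `(x,y) ↦ (x−y,−y)`) or to reflection in
the line through `2+ω` (`(x,y) ↦ (x, x−y)`); and these two modules `ℤ[ω]'`,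
`ℤ[ω]''` are not isomorphic. -/
theorem D6_extensions_of_omega_action
    (τ : (ℤ × ℤ) →ₗ[ℤ] (ℤ × ℤ))
    (hτ2 : ∀ v, τ (τ v) = v)
    -- the relation `τ g τ = g⁻¹`, where `g⁻¹(x,y) = (y−x, −x)`
    (hrel : ∀ v : ℤ × ℤ,
      τ ((-(τ v).2, (τ v).1 - (τ v).2)) = ((v.2 - v.1, -v.1) : ℤ × ℤ)) :
    (∃ e : (ℤ × ℤ) ≃ₗ[ℤ] (ℤ × ℤ),
      (∀ v : ℤ × ℤ, e ((-v.2, v.1 - v.2)) = (-(e v).2, (e v).1 - (e v).2)) ∧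
      ((∀ v : ℤ × ℤ, e (τ v) = ((e v).1 - (e v).2, -(e v).2)) ∨
       (∀ v : ℤ × ℤ, e (τ v) = ((e v).1, (e v).1 - (e v).2)))) ∧
    ¬ ∃ e : (ℤ × ℤ) ≃ₗ[ℤ] (ℤ × ℤ),
      (∀ v : ℤ × ℤ, e ((-v.2, v.1 - v.2)) = (-(e v).2, (e v).1 - (e v).2)) ∧
      (∀ v : ℤ × ℤ, e ((v.1 - v.2, -v.2)) = ((e v).1, (e v).1 - (e v).2)) := by
  constructor
  · -- existence of the conjugating equivalence
    obtain ⟨a, c, hac⟩ : ∃ a c, τ (1,0) = (a, c) := ⟨_, _, rfl⟩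
    -- from the relation: τ ∘ g = g² ∘ τ
    have h5 : ∀ v : ℤ × ℤ, τ (-v.2, v.1 - v.2) = ((τ v).2 - (τ v).1, -(τ v).1) := by
      intro v
      have h := hrel (τ v)
      rw [hτ2 v] at h
      exact h
    have hbd : τ (0,1) = (c - a, -a) := by
      have h := h5 (1,0)
      norm_num [hac] at h
      exact h
    have hveq : ∀ v : ℤ × ℤ, τ v = (v.1 * a + v.2 * (c - a), v.1 * c - v.2 * a) := by
      intro v
      rw [lin_expand τ v, hac, hbd]
      ext <;> simp <;> ring
    -- τ² = 1 at (1,0) forces a² − ac + c² = 1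
    have key : a * a - a * c + c * c = 1 := by
      have h := hτ2 (1,0)
      rw [hveq (1,0), hveq _] at h
      simp [Prod.ext_iff] at h
      nlinarith [h.1]
    have hA : a ^ 2 ≤ 1 := by nlinarith [sq_nonneg (a - 2*c)]
    have hC : c ^ 2 ≤ 1 := by nlinarith [sq_nonneg (c - 2*a)]
    have ha1 : -1 ≤ a := by nlinarith [sq_nonneg (a + 1)]
    have ha2 : a ≤ 1 := by nlinarith [sq_nonneg (a - 1)]
    have hc1 : -1 ≤ c := by nlinarith [sq_nonneg (c + 1)]
    have hc2 : c ≤ 1 := by nlinarith [sq_nonneg (c - 1)]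
    interval_cases a <;> interval_cases c
    -- (a,c) = (-1,-1) : conjugate by g² to conjugation
    · exact ⟨gE2, fun v => by simp [gE2_apply, Prod.ext_iff] <;> ring,
        Or.inl fun v => by simp [gE2_apply, hveq, Prod.ext_iff] <;> omega⟩
    -- (a,c) = (-1,0) : conjugate by g to reflection in 2+ω
    · exact ⟨gE, fun v => by simp [gE_apply, Prod.ext_iff] <;> ring,
        Or.inr fun v => by simp [gE_apply, hveq, Prod.ext_iff] <;> omega⟩
    -- (a,c) = (-1,1) : impossible
    · omega
    -- (a,c) = (0,-1) : conjugate by g² to reflection in 2+ω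
    · exact ⟨gE2, fun v => by simp [gE2_apply, Prod.ext_iff] <;> ring,
        Or.inr fun v => by simp [gE2_apply, hveq, Prod.ext_iff] <;> omega⟩
    -- (a,c) = (0,0) : impossible
    · omega
    -- (a,c) = (0,1) : conjugate by g to conjugation
    · exact ⟨gE, fun v => by simp [gE_apply, Prod.ext_iff] <;> ring,
        Or.inl fun v => by simp [gE_apply, hveq, Prod.ext_iff] <;> omega⟩
    -- (a,c) = (1,-1) : impossible
    · omega
    -- (a,c) = (1,0) : already conjugation
    · exact ⟨LinearEquiv.refl ℤ _, fun v => by simp [refl_apply],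
        Or.inl fun v => by simp [refl_apply, hveq, Prod.ext_iff] <;> omega⟩
    -- (a,c) = (1,1) : already reflection in 2+ω
    · exact ⟨LinearEquiv.refl ℤ _, fun v => by simp [refl_apply],
        Or.inr fun v => by simp [refl_apply, hveq, Prod.ext_iff] <;> omega⟩
  · -- non-isomorphism of the two modules
    rintro ⟨e, hcomm, hτ⟩
    obtain ⟨p, q, hpq⟩ : ∃ p q, e (1,0) = (p, q) := ⟨_, _, rfl⟩
    have h01 : e (0,1) = (-q, p - q) := by
      have h := hcomm (1,0)
      norm_num [hpq] at h
      exact h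
    have he : ∀ v : ℤ × ℤ, e v = (p * v.1 - q * v.2, q * v.1 + (p - q) * v.2) := by
      intro v
      have h := lin_expand e.toLinearMap v
      simp only [LinearEquiv.coe_coe] at h
      rw [h, hpq, h01]
      ext <;> simp <;> ring
    have hp2q : p = 2 * q := by
      have h := hτ (1,0)
      norm_num [hpq] at h
      omega
    obtain ⟨v, hv1⟩ := e.surjective (1, 0)
    rw [he v] at hv1
    rw [Prod.ext_iff] at hv1
    obtain ⟨h1, h2⟩ := hv1
    have h3 : (3 : ℤ) ∣ 1 := ⟨q * v.1, by subst hp2q; simp at h1 h2 ⊢; linear_combination -h1 - h2⟩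
    norm_num at h3
end
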